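/- Let A be a Banach algebra and σ : A → A a continuous algebra homomorphism with dense range. If A is σ-amenable, then A is amenable. -/

import Mathlib

/-!
Statement 11: Let A be a Banach algebra and σ : A → A a continuous algebra
homomorphism with dense range. If A is σ-amenable, then A is amenable.

A Banach A-bimodule is a Banach space `X` with continuous bimodule actions
`lX`, `rX`; its dual carries the actions `(a·f)(x) = f(x·a)`,
`(f·a)(x) = f(a·x)`.  A σ-derivation `D : A → X*` satisfies
`D(ab) = σ(a)·D(b) + D(a)·σ(b)`, and is σ-inner if
`D(a) = σ(a)·f − f·σ(a)` for some `f ∈ X*`.  `A` is σ-amenable if every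
σ-derivation into the dual of any Banach A-bimodule is σ-inner, and
amenable when this holds for σ = id.
-/

universe u

/-- `A` is σ-amenable: every σ-derivation into a dual Banach A-bimodule is
σ-inner. -/
def SigmaAmenable (A : Type u) [NonUnitalNormedRing A] [NormedSpace ℂ A]
    (σ : A →L[ℂ] A) : Prop :=
  ∀ (X : Type u) [NormedAddCommGroup X] [NormedSpace ℂ X] [CompleteSpace X]
    (lX rX : A →L[ℂ] X →L[ℂ] X),
    (∀ (a b : A) (x : X), lX (a * b) x = lX a (lX b x)) →
    (∀ (a b : A) (x : X), rX (a * b) x = rX b (rX a x)) →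
    (∀ (a b : A) (x : X), lX a (rX b x) = rX b (lX a x)) →
    ∀ D : A →L[ℂ] (X →L[ℂ] ℂ),
      (∀ a b : A, D (a * b) = (D b).comp (rX (σ a)) + (D a).comp (lX (σ b))) →
      ∃ f : X →L[ℂ] ℂ, ∀ a : A, D a = f.comp (rX (σ a)) - f.comp (lX (σ a))

/-- `A` is amenable: every bounded derivation into a dual Banach A-bimodule
is inner. -/
def Amenable (A : Type u) [NonUnitalNormedRing A] [NormedSpace ℂ A] : Prop :=
  SigmaAmenable A (ContinuousLinearMap.id ℂ A)

section

variable {𝕜 A X : Type*} [NontriviallyNormedField 𝕜] [NonUnitalNormedRing A] [NormedSpace 𝕜 A]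
  [NormedAddCommGroup X] [NormedSpace 𝕜 X]

noncomputable def dualCommutator (lX rX : A →L[𝕜] X →L[𝕜] X) (f : X →L[𝕜] 𝕜) : A →L[𝕜] X →L[𝕜] 𝕜 :=
  (ContinuousLinearMap.compL 𝕜 X X 𝕜 f).comp rX - (ContinuousLinearMap.compL 𝕜 X X 𝕜 f).comp lX

def IsSigmaDerivation (σ : A →L[𝕜] A) (lX rX : A →L[𝕜] X →L[𝕜] X)
    (D : A →L[𝕜] X →L[𝕜] 𝕜) : Prop :=
  ∀ a b : A, D (a * b) = (D b).comp (rX (σ a)) + (D a).comp (lX (σ b))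

theorem IsSigmaDerivation.comp {τ σ : A →L[𝕜] A} {lX rX : A →L[𝕜] X →L[𝕜] X}
    {D : A →L[𝕜] X →L[𝕜] 𝕜} (hD : IsSigmaDerivation τ lX rX D)
    (hσ : ∀ a b : A, σ (a * b) = σ a * σ b) :
    IsSigmaDerivation (τ.comp σ) lX rX (D.comp σ) := by
  intro a b
  simp only [ContinuousLinearMap.comp_apply, hσ a b]
  exact hD (σ a) (σ b)

end

theorem sigma_amenable_implies_amenable_of_denseRange_general
    -- A is a Banach algebra
    (A : Type u) [NonUnitalNormedRing A] [NormedSpace ℂ A]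
    -- σ is a continuous algebra homomorphism on A with dense range
    (σ : A →L[ℂ] A) (hσ : ∀ a b : A, σ (a * b) = σ a * σ b)
    (hdense : DenseRange ⇑σ)
    -- A is σ-amenable
    (hamen : SigmaAmenable A σ) :
    -- Then A is amenable
    Amenable A := by
  intro X _ _ _ lX rX hl hr hlr D hD
  have hDσ : IsSigmaDerivation σ lX rX (D.comp σ) :=
    IsSigmaDerivation.comp (τ := ContinuousLinearMap.id ℂ A) hD hσ
  obtain ⟨f, hf⟩ := hamen X lX rX hl hr hlr (D.comp σ) hDσ
  have hD_eq : ⇑D = dualCommutator lX rX f :=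
    hdense.equalizer D.continuous (dualCommutator lX rX f).continuous (funext hf)
  exact ⟨f, congrFun hD_eq⟩

theorem sigma_amenable_implies_amenable_of_denseRange
    -- A is a Banach algebra
    (A : Type u) [NonUnitalNormedRing A] [NormedSpace ℂ A]
    [IsScalarTower ℂ A A] [SMulCommClass ℂ A A] [CompleteSpace A]
    -- σ is a continuous algebra homomorphism on A with dense range
    (σ : A →L[ℂ] A) (hσ : ∀ a b : A, σ (a * b) = σ a * σ b)
    (hdense : DenseRange ⇑σ)
    -- A is σ-amenable
    (hamen : SigmaAmenable A σ) :
    -- Then A is amenable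
    Amenable A :=
  sigma_amenable_implies_amenable_of_denseRange_general A σ hσ hdense hamen
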